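/- For n ≥ 3, if F is a strongly independent set of vertices of Q_n, then Q_n − F is (n−1)-connected. -/

import Mathlib

set_option linter.unusedSectionVars false

section Basic
variable {ι : Type} [Fintype ι] [DecidableEq ι]

def fl (x : ι → ZMod 2) (j : ι) : ι → ZMod 2 := Function.update x j (x j + 1)

lemma zmod2_add_one_ne : ∀ a : ZMod 2, a + 1 ≠ a := by decide

lemma zmod2_ne_iff : ∀ {a b : ZMod 2}, a ≠ b → b = a + 1 := by decide

@[simp] lemma fl_apply_self (x : ι → ZMod 2) (j : ι) : fl x j j = x j + 1 := by
  simp [fl]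

lemma fl_apply_ne (x : ι → ZMod 2) {j k : ι} (h : k ≠ j) : fl x j k = x k := by
  simp [fl, Function.update_of_ne h]

lemma fl_fl (x : ι → ZMod 2) (j : ι) : fl (fl x j) j = x := by
  funext k
  by_cases h : k = j
  · subst h
    rw [fl_apply_self, fl_apply_self, add_assoc]
    have h11 : (1 : ZMod 2) + 1 = 0 := rfl
    rw [h11, add_zero]
  · rw [fl_apply_ne _ h, fl_apply_ne _ h]

lemma fl_comm (x : ι → ZMod 2) {a b : ι} (h : a ≠ b) :
    fl (fl x a) b = fl (fl x b) a := by
  funext k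
  by_cases hk : k = a
  · subst hk
    rw [fl_apply_ne _ h, fl_apply_self, fl_apply_self, fl_apply_ne _ h]
  · by_cases hk2 : k = b
    · subst hk2
      rw [fl_apply_self, fl_apply_ne _ (Ne.symm h), fl_apply_ne _ (Ne.symm h),
        fl_apply_self]
    · rw [fl_apply_ne _ hk2, fl_apply_ne _ hk, fl_apply_ne _ hk, fl_apply_ne _ hk2]

lemma fl_ne (x : ι → ZMod 2) (j : ι) : fl x j ≠ x := fun h => by
  have := congrFun h j
  simp at this

lemma fl_inj_index (x : ι → ZMod 2) {a b : ι} (h : fl x a = fl x b) : a = b := by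
  by_contra hab
  have := congrFun h a
  rw [fl_apply_self, fl_apply_ne _ hab] at this
  exact zmod2_add_one_ne _ this

lemma hamming_fl (x : ι → ZMod 2) (j : ι) : hammingDist x (fl x j) = 1 := by
  have h : (Finset.univ.filter fun k => x k ≠ fl x j k) = {j} := by
    ext k
    simp only [Finset.mem_filter, Finset.mem_univ, true_and, Finset.mem_singleton]
    constructor
    · intro hk
      by_contra hkj
      exact hk (fl_apply_ne x hkj).symm
    · intro hk
      subst hk
      rw [fl_apply_self]
      exact fun e => zmod2_add_one_ne _ e.symm
  rw [hammingDist, h, Finset.card_singleton]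

lemma hamming_fl_fl (x : ι → ZMod 2) {a b : ι} (h : a ≠ b) :
    hammingDist (fl x a) (fl x b) = 2 := by
  have hset : (Finset.univ.filter fun k => fl x a k ≠ fl x b k) = {a, b} := by
    ext k
    simp only [Finset.mem_filter, Finset.mem_univ, true_and, Finset.mem_insert,
      Finset.mem_singleton]
    constructor
    · intro hk
      by_contra hab
      push_neg at hab
      rw [fl_apply_ne _ hab.1, fl_apply_ne _ hab.2] at hk
      exact hk rfl
    · intro hk
      rcases hk with rfl | rfl
      · rw [fl_apply_self, fl_apply_ne _ h]
        exact zmod2_add_one_ne _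
      · rw [fl_apply_self, fl_apply_ne _ (Ne.symm h)]
        exact fun e => zmod2_add_one_ne _ e.symm
  rw [hammingDist, hset, Finset.card_insert_of_notMem (by simpa using h),
    Finset.card_singleton]

end Basic

section Main
variable {ι : Type} [Fintype ι] [DecidableEq ι]

lemma card_ne (i : ι) : Fintype.card {j : ι // j ≠ i} = Fintype.card ι - 1 := by
  have := Fintype.card_subtype_compl (fun j : ι => j = i)
  rw [Fintype.card_subtype_eq] at this
  exact this

def stepT (T : Set (ι → ZMod 2)) (u v : ι → ZMod 2) : Prop :=
  hammingDist u v = 1 ∧ u ∉ T ∧ v ∉ T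

def indep3 (F : Set (ι → ZMod 2)) : Prop :=
  ∀ u ∈ F, ∀ v ∈ F, u ≠ v → 3 ≤ hammingDist u v

lemma stepT_symm (T : Set (ι → ZMod 2)) : Symmetric (stepT T) :=
  fun _ _ h => ⟨by rw [hammingDist_comm]; exact h.1, h.2.2, h.2.1⟩

def res (i : ι) (x : ι → ZMod 2) : {j : ι // j ≠ i} → ZMod 2 := fun j => x j.1

def ext' (i : ι) (c : ZMod 2) (y : {j : ι // j ≠ i} → ZMod 2) : ι → ZMod 2 :=
  fun j => if h : j = i then c else y ⟨j, h⟩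

lemma res_ext (i : ι) (c : ZMod 2) (y : {j : ι // j ≠ i} → ZMod 2) :
    res i (ext' i c y) = y := by
  funext j
  simp [res, ext', j.2]

lemma ext'_apply_i (i : ι) (c : ZMod 2) (y : {j : ι // j ≠ i} → ZMod 2) :
    ext' i c y i = c := by simp [ext']

lemma ext_res (i : ι) (c : ZMod 2) {x : ι → ZMod 2} (hx : x i = c) :
    ext' i c (res i x) = x := by
  funext j
  by_cases h : j = i
  · subst h; simp [ext', hx]
  · simp [ext', res, h]

lemma hamming_res (i : ι) {x y : ι → ZMod 2} (hxy : x i = y i) :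
    hammingDist (res i x) (res i y) = hammingDist x y := by
  rw [hammingDist, hammingDist, ← Fintype.card_subtype, ← Fintype.card_subtype]
  exact Fintype.card_congr
    { toFun := fun p => ⟨p.1.1, p.2⟩
      invFun := fun q => ⟨⟨q.1, fun h => q.2 (by rw [h]; exact hxy)⟩, q.2⟩
      left_inv := fun p => rfl
      right_inv := fun q => rfl }

/-- The escape lemma: from a safe vertex `w` whose cross-neighbor is not in `S`,
we can reach a safe vertex on the other side of coordinate `i`. -/
lemma escape (hcard2 : 2 ≤ Fintype.card ι) {F S : Set (ι → ZMod 2)} (hF : indep3 F)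
    (hSfin : S.Finite) (hScard : S.ncard ≤ Fintype.card ι - 2) (i : ι) {w : ι → ZMod 2}
    (hw : w ∉ F ∪ S) (hwS : fl w i ∉ S) :
    ∃ q, q ∉ F ∪ S ∧ q i = w i + 1 ∧ Relation.ReflTransGen (stepT (F ∪ S)) w q := by
  classical
  by_cases hwF : fl w i ∈ F
  · -- cross neighbor blocked by F; detour via a coordinate j
    have hex : ∃ j, j ≠ i ∧ fl w j ∉ S ∧ fl (fl w j) i ∉ S := by
      by_contra hall
      push_neg at hall
      set f : {j : ι // j ≠ i} → (ι → ZMod 2) :=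
        fun j => if fl w j.1 ∈ S then fl w j.1 else fl (fl w j.1) i with hf
      have hmem : ∀ a : {j : ι // j ≠ i}, a ∈ (Finset.univ : Finset {j : ι // j ≠ i}) →
          f a ∈ hSfin.toFinset := by
        intro a _
        by_cases h : fl w a.1 ∈ S
        · simp only [hf, if_pos h, Set.Finite.mem_toFinset]
          exact h
        · simp only [hf, if_neg h, Set.Finite.mem_toFinset]
          exact hall a.1 a.2 h
      have hinj : Set.InjOn f (Finset.univ : Finset {j : ι // j ≠ i}) := by
        intro a _ b _ hab
        by_cases ha : fl w a.1 ∈ S <;> by_cases hb : fl w b.1 ∈ S <;>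
          simp only [hf, if_pos, if_neg, ha, hb, if_true, if_false] at hab
        · exact Subtype.ext (fl_inj_index w hab)
        · exfalso
          have := congrFun hab i
          rw [fl_apply_ne w (Ne.symm a.2), fl_apply_self, fl_apply_ne w (Ne.symm b.2)] at this
          exact zmod2_add_one_ne _ this.symm
        · exfalso
          have := congrFun hab i
          rw [fl_apply_ne w (Ne.symm b.2), fl_apply_self, fl_apply_ne w (Ne.symm a.2)] at this
          exact zmod2_add_one_ne _ this
        · have h2 : fl w a.1 = fl w b.1 := by
            have := congrArg (fun z => fl z i) hab
            simpa [fl_fl] using this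
          exact Subtype.ext (fl_inj_index w h2)
      have hle := Finset.card_le_card_of_injOn f hmem hinj
      rw [Finset.card_univ, card_ne, ← Set.ncard_eq_toFinset_card S hSfin] at hle
      omega
    obtain ⟨j, hji, hjS, hjS'⟩ := hex
    set y := fl w j with hy
    set y' := fl y i with hy'
    have hyi : y i = w i := fl_apply_ne w (Ne.symm hji)
    have hyF : y ∉ F := by
      intro hyF
      have hne : y ≠ fl w i := by
        intro e
        have := congrFun e i
        rw [hyi, fl_apply_self] at this
        exact zmod2_add_one_ne _ this.symm
      have := hF y hyF (fl w i) hwF hne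
      rw [hy, hamming_fl_fl w hji] at this
      omega
    have hy'F : y' ∉ F := by
      intro hy'F
      have he : y' = fl (fl w i) j := by rw [hy', hy, fl_comm w hji]
      have hne : y' ≠ fl w i := by rw [he]; exact fl_ne _ j
      have := hF y' hy'F (fl w i) hwF hne
      rw [he, hammingDist_comm, hamming_fl] at this
      omega
    refine ⟨y', ?_, ?_, ?_⟩
    · rintro (h | h)
      · exact hy'F h
      · exact hjS' h
    · rw [hy', fl_apply_self, hyi]
    · have s1 : stepT (F ∪ S) w y := ⟨hamming_fl w j, hw, by rintro (h | h); exacts [hyF h, hjS h]⟩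
      have s2 : stepT (F ∪ S) y y' :=
        ⟨hamming_fl y i, s1.2.2, by rintro (h | h); exacts [hy'F h, hjS' h]⟩
      exact (Relation.ReflTransGen.single s1).tail s2
  · refine ⟨fl w i, by rintro (h | h); exacts [hwF h, hwS h], fl_apply_self w i, ?_⟩
    exact Relation.ReflTransGen.single
      ⟨hamming_fl w i, hw, by rintro (h | h); exacts [hwF h, hwS h]⟩

end Main

section Main2
variable {ι : Type} [Fintype ι] [DecidableEq ι]

def MainStmt (n : ℕ) : Prop :=
  ∀ (κ : Type) [Fintype κ] [DecidableEq κ], Fintype.card κ = n → 2 ≤ n →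
    ∀ F S : Set (κ → ZMod 2), indep3 F → S.Finite → S.ncard ≤ n - 2 →
      ∀ u, u ∉ F ∪ S → ∀ v, v ∉ F ∪ S → Relation.ReflTransGen (stepT (F ∪ S)) u v

/-- Two safe vertices in the same half are connected, provided the half contains
at most `n - 2` vertices of `S`. -/
lemma halfLift (n : ℕ) (IH : MainStmt n) (hn : 2 ≤ n) (hcard : Fintype.card ι = n + 1)
    (i : ι) (c : ZMod 2) {F S : Set (ι → ZMod 2)} (hF : indep3 F) (hSfin : S.Finite)
    (hhalf : ({x | x ∈ S ∧ x i = c} : Set (ι → ZMod 2)).ncard ≤ n - 2) :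
    ∀ x, x ∉ F ∪ S → x i = c → ∀ y, y ∉ F ∪ S → y i = c →
      Relation.ReflTransGen (stepT (F ∪ S)) x y := by
  classical
  intro x hx hxc y hy hyc
  have hκ : Fintype.card {j : ι // j ≠ i} = n := by
    rw [card_ne i, hcard, Nat.add_sub_cancel]
  set Fh : Set (ι → ZMod 2) := {z | z ∈ F ∧ z i = c} with hFh
  set Sh : Set (ι → ZMod 2) := {z | z ∈ S ∧ z i = c} with hSh
  set F' := res i '' Fh with hF'def
  set S' := res i '' Sh with hS'def
  have hinj : ∀ a b : ι → ZMod 2, a i = c → b i = c → res i a = res i b → a = b := by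
    intro a b ha hb hab
    rw [← ext_res i c ha, ← ext_res i c hb, hab]
  have hF' : indep3 F' := by
    rintro u' ⟨u, hu, rfl⟩ v' ⟨v, hv, rfl⟩ hne
    have huv : u ≠ v := fun e => hne (by rw [e])
    rw [hamming_res i (hu.2.trans hv.2.symm)]
    exact hF u hu.1 v hv.1 huv
  have hS'fin : S'.Finite := (hSfin.subset (fun z hz => hz.1)).image _
  have hS'card : S'.ncard ≤ n - 2 := by
    rw [hS'def, Set.ncard_image_of_injOn (fun a ha b hb hab => hinj a b ha.2 hb.2 hab)]
    exact hhalf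
  have hmem : ∀ z, z i = c → z ∉ F ∪ S → res i z ∉ F' ∪ S' := by
    intro z hzc hz
    rintro (⟨a, ha, hres⟩ | ⟨a, ha, hres⟩)
    · have e := hinj a z ha.2 hzc hres
      rw [e] at ha
      exact hz (Or.inl ha.1)
    · have e := hinj a z ha.2 hzc hres
      rw [e] at ha
      exact hz (Or.inr ha.1)
  have chain' := IH {j : ι // j ≠ i} hκ hn F' S' hF' hS'fin hS'card
    (res i x) (hmem x hxc hx) (res i y) (hmem y hyc hy)
  have hstep : ∀ a b, stepT (F' ∪ S') a b →
      stepT (F ∪ S) (ext' i c a) (ext' i c b) := by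
    rintro a b ⟨h1, ha, hb⟩
    have hi : ext' i c a i = ext' i c b i := by rw [ext'_apply_i, ext'_apply_i]
    refine ⟨?_, ?_, ?_⟩
    · rw [← hamming_res i hi, res_ext, res_ext]; exact h1
    · rintro (h | h)
      · exact ha (Or.inl ⟨ext' i c a, ⟨h, ext'_apply_i i c a⟩, res_ext i c a⟩)
      · exact ha (Or.inr ⟨ext' i c a, ⟨h, ext'_apply_i i c a⟩, res_ext i c a⟩)
    · rintro (h | h)
      · exact hb (Or.inl ⟨ext' i c b, ⟨h, ext'_apply_i i c b⟩, res_ext i c b⟩)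
      · exact hb (Or.inr ⟨ext' i c b, ⟨h, ext'_apply_i i c b⟩, res_ext i c b⟩)
  have lifted : Relation.ReflTransGen (stepT (F ∪ S)) (ext' i c (res i x)) (ext' i c (res i y)) :=
    Relation.ReflTransGen.lift (ext' i c) hstep _ _ chain'
  rwa [ext_res i c hxc, ext_res i c hyc] at lifted

end Main2

section MainProof
variable {ι : Type} [Fintype ι] [DecidableEq ι]

/-- Injectivity of the "blocked witness" choice. -/
lemma pick_inj (w : ι → ZMod 2) {i a b : ι} (ha : a ≠ i) (hb : b ≠ i)
    {x y : ι → ZMod 2} (hx : x = fl w a ∨ x = fl (fl w a) i)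
    (hy : y = fl w b ∨ y = fl (fl w b) i) (hxy : x = y) : a = b := by
  subst hxy
  rcases hx with rfl | h1 <;> rcases hy with h2 | h2
  · exact fl_inj_index w h2
  · exfalso
    have h3 := congrFun h2 i
    rw [fl_apply_ne w (Ne.symm ha), fl_apply_self, fl_apply_ne w (Ne.symm hb)] at h3
    exact zmod2_add_one_ne _ h3.symm
  · exfalso
    have h3 := congrFun (h1.symm.trans h2) i
    rw [fl_apply_self, fl_apply_ne w (Ne.symm ha), fl_apply_ne w (Ne.symm hb)] at h3
    exact zmod2_add_one_ne _ h3
  · have h3 : fl w a = fl w b := by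
      have h4 := congrArg (fun z => fl z i) (h1.symm.trans h2)
      simpa [fl_fl] using h4
    exact fl_inj_index w h3

lemma main_lemma : ∀ n : ℕ, MainStmt n := by
  intro n
  induction n with
  | zero => intro κ _ _ _ h2; omega
  | succ n IH =>
    intro κ instF instD hcard h2 F S hF hSfin hScard u hu v hv
    rcases Nat.lt_or_ge n 2 with hbase | hstep
    -- base case : n = 1, the square Q_2
    · have hn1 : n = 1 := by omega
      subst hn1
      have hS : S = ∅ := by
        have h0 : S.ncard = 0 := by omega
        exact (Set.ncard_eq_zero hSfin).mp h0
      subst hS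
      have hT : ∀ z, z ∉ F → z ∉ F ∪ (∅ : Set (κ → ZMod 2)) := by
        intro z hz h
        rcases h with h | h
        · exact hz h
        · exact Set.notMem_empty z h
      have hFsub : ∀ a ∈ F, ∀ b ∈ F, a = b := by
        intro a ha b hb
        by_contra hab
        have h3 := hF a ha b hb hab
        have h4 : hammingDist a b ≤ Fintype.card κ := hammingDist_le_card_fintype
        rw [hcard] at h4
        omega
      by_cases h0 : hammingDist u v = 0
      · rw [hammingDist_eq_zero] at h0
        rw [h0]
      by_cases h1 : hammingDist u v = 1
      · exact Relation.ReflTransGen.single ⟨h1, hu, hv⟩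
      -- distance 2
      have hd2 : hammingDist u v ≤ 2 := by
        have h4 : hammingDist u v ≤ Fintype.card κ := hammingDist_le_card_fintype
        rwa [hcard] at h4
      have hD : hammingDist u v = 2 := by omega
      have hall : ∀ k, u k ≠ v k := by
        by_contra hcon
        push_neg at hcon
        obtain ⟨k, hk⟩ := hcon
        have hsub : (Finset.univ.filter fun l => u l ≠ v l) ⊆ Finset.univ.erase k := by
          intro l hl
          simp only [Finset.mem_filter, Finset.mem_univ, true_and] at hl
          refine Finset.mem_erase.mpr ⟨?_, Finset.mem_univ l⟩
          rintro rfl; exact hl hk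
        have hcle := Finset.card_le_card hsub
        rw [Finset.card_erase_of_mem (Finset.mem_univ k), Finset.card_univ, hcard] at hcle
        rw [hammingDist] at hD
        omega
      obtain ⟨j, hj⟩ : ∃ j, u j ≠ v j := by
        by_contra hcon
        push_neg at hcon
        exact h0 (hammingDist_eq_zero.mpr (funext hcon))
      obtain ⟨k, hkj⟩ := Fintype.exists_ne_of_one_lt_card (by rw [hcard]; omega) j
      have honly : ∀ l : κ, l = j ∨ l = k := by
        intro l
        by_contra hl
        push_neg at hl
        have hc3 : ({j, k, l} : Finset κ).card = 3 := by
          rw [Finset.card_insert_of_notMem (by simp [Ne.symm hkj, hl.1.symm, hl.2.symm]),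
            Finset.card_insert_of_notMem (by simp [hl.2.symm]), Finset.card_singleton]
        have hc4 := Finset.card_le_card (Finset.subset_univ ({j, k, l} : Finset κ))
        rw [Finset.card_univ, hcard, hc3] at hc4
        omega
      have hmid : ∀ a b : κ, a ≠ b → hammingDist (fl u a) v = 1 := by
        intro a b hab
        have honly' : ∀ l : κ, l = a ∨ l = b := by
          intro l
          rcases honly a with ha | ha <;> rcases honly b with hb | hb
          · exact absurd (ha.trans hb.symm) hab
          · rcases honly l with hl | hl
            · exact Or.inl (hl.trans ha.symm)
            · exact Or.inr (hl.trans hb.symm)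
          · rcases honly l with hl | hl
            · exact Or.inr (hl.trans hb.symm)
            · exact Or.inl (hl.trans ha.symm)
          · exact absurd (ha.trans hb.symm) hab
        have hset : (Finset.univ.filter fun l => fl u a l ≠ v l) = {b} := by
          ext l
          simp only [Finset.mem_filter, Finset.mem_univ, true_and, Finset.mem_singleton]
          constructor
          · intro hlv
            rcases honly' l with rfl | rfl
            · exfalso
              rw [fl_apply_self, ← zmod2_ne_iff (hall l)] at hlv
              exact hlv rfl
            · rfl
          · rintro rfl
            rw [fl_apply_ne u (Ne.symm hab)]
            exact hall l
        rw [hammingDist, hset, Finset.card_singleton]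
      have hm1 : hammingDist (fl u j) v = 1 := hmid j k (Ne.symm hkj)
      have hm2 : hammingDist (fl u k) v = 1 := hmid k j hkj
      have hmne : fl u j ≠ fl u k := fun e => (Ne.symm hkj) (fl_inj_index u e)
      by_cases hmf : fl u j ∈ F
      · have hm2f : fl u k ∉ F := fun h => hmne (hFsub _ hmf _ h)
        exact (Relation.ReflTransGen.single ⟨hamming_fl u k, hu, hT _ hm2f⟩).tail
          ⟨hm2, hT _ hm2f, hv⟩
      · exact (Relation.ReflTransGen.single ⟨hamming_fl u j, hu, hT _ hmf⟩).tail
          ⟨hm1, hT _ hmf, hv⟩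
    -- inductive step : 2 ≤ n
    · have hcard2 : 2 ≤ Fintype.card κ := by rw [hcard]; omega
      have hScard' : S.ncard ≤ Fintype.card κ - 2 := by rw [hcard]; exact hScard
      have symmQ : ∀ {a b}, Relation.ReflTransGen (stepT (F ∪ S)) a b →
          Relation.ReflTransGen (stepT (F ∪ S)) b a := by
        haveI : Std.Symm (stepT (F ∪ S)) := ⟨fun a b h => stepT_symm (F ∪ S) h⟩
        intro a b h
        exact Std.Symm.symm _ _ h
      classical
      by_cases hSex : ∃ s₀ ∈ S, ∃ s₁ ∈ S, s₀ ≠ s₁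
      · -- S has two distinct elements; split along a differing coordinate
        obtain ⟨s₀, hs₀, s₁, hs₁, hne⟩ := hSex
        obtain ⟨i, hi⟩ : ∃ i, s₀ i ≠ s₁ i := by
          by_contra hcon
          push_neg at hcon
          exact hne (funext hcon)
        have hhalf : ∀ c : ZMod 2,
            ({x | x ∈ S ∧ x i = c} : Set (κ → ZMod 2)).ncard ≤ n - 2 := by
          intro c
          have hwit : ∃ s ∈ S, s i ≠ c := by
            by_cases h0 : s₀ i = c
            · exact ⟨s₁, hs₁, fun h => hi (h0.trans h.symm)⟩
            · exact ⟨s₀, hs₀, h0⟩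
          obtain ⟨s, hs, hsc⟩ := hwit
          have hss : ({x | x ∈ S ∧ x i = c} : Set (κ → ZMod 2)) ⊂ S :=
            ⟨fun x hx => hx.1, fun hsub => hsc (hsub hs).2⟩
          have hlt := Set.ncard_lt_ncard hss hSfin
          have hSn2 : S.ncard ≤ n - 1 := hScard
          generalize hgen : ({x | x ∈ S ∧ x i = c} : Set (κ → ZMod 2)).ncard = m at hlt ⊢
          clear * - hlt hSn2 hstep
          omega
        by_cases hc : u i = v i
        · exact halfLift n IH hstep hcard i (u i) hF hSfin (hhalf (u i)) u hu rfl v hv hc.symm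
        · have hvi : v i = u i + 1 := zmod2_ne_iff hc
          by_cases hfu : fl u i ∈ S
          · -- cross neighbour of u is in S: find a detour coordinate j
            have hex : ∃ j, j ≠ i ∧ fl u j ∉ F ∧ fl u j ∉ S ∧ fl (fl u j) i ∉ S := by
              by_contra hallb
              push_neg at hallb
              have hcompl : (Finset.univ.filter fun j : κ => j = i ∨ fl u j ∈ F).card ≤ 2 := by
                have hsub : (Finset.univ.filter fun j : κ => j = i ∨ fl u j ∈ F) ⊆
                    insert i (Finset.univ.filter fun j : κ => fl u j ∈ F) := by
                  intro j hj
                  simp only [Finset.mem_filter, Finset.mem_univ, true_and] at hj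
                  rcases hj with rfl | hj
                  · exact Finset.mem_insert_self _ _
                  · exact Finset.mem_insert_of_mem (by simp [hj])
                have hF1 : (Finset.univ.filter fun j : κ => fl u j ∈ F).card ≤ 1 := by
                  rw [Finset.card_le_one]
                  intro a ha b hb
                  simp only [Finset.mem_filter, Finset.mem_univ, true_and] at ha hb
                  by_contra hab
                  have h5 := hF _ ha _ hb (fun e => hab (fl_inj_index u e))
                  rw [hamming_fl_fl u hab] at h5
                  omega
                have := Finset.card_le_card hsub
                have := Finset.card_insert_le i (Finset.univ.filter fun j : κ => fl u j ∈ F)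
                omega
              obtain ⟨B, hB⟩ : ∃ B : Finset κ,
                  B = Finset.univ.filter (fun j : κ => ¬(j = i ∨ fl u j ∈ F)) := ⟨_, rfl⟩
              have hBcard : n - 1 ≤ B.card := by
                have hcc := Finset.card_filter_add_card_filter_not
                  (s := (Finset.univ : Finset κ)) (p := fun j : κ => j = i ∨ fl u j ∈ F)
                rw [Finset.card_univ, hcard, ← hB] at hcc
                omega
              have hor : ∀ x : κ, (if fl u x ∈ S then fl u x else fl (fl u x) i) = fl u x ∨
                  (if fl u x ∈ S then fl u x else fl (fl u x) i) = fl (fl u x) i := by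
                intro x
                by_cases h : fl u x ∈ S
                · rw [if_pos h]; exact Or.inl rfl
                · rw [if_neg h]; exact Or.inr rfl
              have hφmem : ∀ j ∈ B, (if fl u j ∈ S then fl u j else fl (fl u j) i) ∈
                  (hSfin.toFinset.erase (fl u i)) := by
                intro j hj
                rw [hB, Finset.mem_filter] at hj
                have hj' := hj.2
                push_neg at hj'
                obtain ⟨hji, hjF⟩ := hj'
                refine Finset.mem_erase.mpr ⟨?_, ?_⟩
                · by_cases h : fl u j ∈ S
                  · rw [if_pos h]
                    intro e; exact hji (fl_inj_index u e)
                  · rw [if_neg h]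
                    intro e
                    have he := congrFun e j
                    rw [fl_apply_ne (fl u j) hji, fl_apply_self, fl_apply_ne u hji] at he
                    exact zmod2_add_one_ne _ he
                · by_cases h : fl u j ∈ S
                  · rw [if_pos h, Set.Finite.mem_toFinset]; exact h
                  · rw [if_neg h, Set.Finite.mem_toFinset]
                    exact hallb j hji hjF h
              have hφinj : Set.InjOn (fun j : κ => if fl u j ∈ S then fl u j else fl (fl u j) i)
                  (B : Set κ) := by
                intro a ha b hb hab
                rw [Finset.mem_coe, hB, Finset.mem_filter] at ha hb
                have ha' := ha.2; have hb' := hb.2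
                push_neg at ha' hb'
                dsimp only at hab
                exact pick_inj u ha'.1 hb'.1 (hor a) (hor b) hab
              have hle := Finset.card_le_card_of_injOn _ hφmem hφinj
              have herase : (hSfin.toFinset.erase (fl u i)).card = S.ncard - 1 := by
                rw [Finset.card_erase_of_mem (by rw [Set.Finite.mem_toFinset]; exact hfu),
                  ← Set.ncard_eq_toFinset_card S hSfin]
              omega
            obtain ⟨j, hji, hjF, hjS, hjS'⟩ := hex
            have hwT : fl u j ∉ F ∪ S := by rintro (h | h); exacts [hjF h, hjS h]
            have hwi : fl u j i = u i := fl_apply_ne u (Ne.symm hji)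
            obtain ⟨q, hq, hqi, hchain⟩ := escape hcard2 hF hSfin hScard' i hwT hjS'
            have hqv : q i = v i := by rw [hqi, hwi, hvi]
            have leg1 := halfLift n IH hstep hcard i (u i) hF hSfin (hhalf (u i))
              u hu rfl (fl u j) hwT hwi
            have leg3 := halfLift n IH hstep hcard i (v i) hF hSfin (hhalf (v i))
              q hq hqv v hv rfl
            exact (leg1.trans hchain).trans leg3
          · -- cross neighbour of u is free of S: escape directly from u
            obtain ⟨q, hq, hqi, hchain⟩ := escape hcard2 hF hSfin hScard' i hu hfu
            have hqv : q i = v i := by rw [hqi, hvi]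
            have leg2 := halfLift n IH hstep hcard i (v i) hF hSfin (hhalf (v i))
              q hq hqv v hv rfl
            exact hchain.trans leg2
      · -- S is a subsingleton: all of S lives in one half
        push_neg at hSex
        have hne : Nonempty κ := by
          rw [← Fintype.card_pos_iff, hcard]; omega
        obtain ⟨i⟩ := hne
        obtain ⟨c, hchalf⟩ : ∃ c : ZMod 2, ∀ s ∈ S, s i ≠ c := by
          by_cases hSne : S.Nonempty
          · obtain ⟨s, hs⟩ := hSne
            refine ⟨s i + 1, fun t ht => ?_⟩
            rw [hSex t ht s hs]
            exact fun e => zmod2_add_one_ne _ e.symm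
          · exact ⟨0, fun t ht => absurd ⟨t, ht⟩ hSne⟩
        have hhalf0 : ({x | x ∈ S ∧ x i = c} : Set (κ → ZMod 2)).ncard ≤ n - 2 := by
          have : ({x | x ∈ S ∧ x i = c} : Set (κ → ZMod 2)) = ∅ := by
            ext x
            simp only [Set.mem_setOf_eq, Set.mem_empty_iff_false, iff_false, not_and]
            exact fun hx => hchalf x hx
          rw [this, Set.ncard_empty]
          omega
        -- bring any safe vertex to the half `x i = c`
        have hbring : ∀ w, w ∉ F ∪ S →
            ∃ p, p ∉ F ∪ S ∧ p i = c ∧ Relation.ReflTransGen (stepT (F ∪ S)) w p := by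
          intro w hw
          by_cases hwc : w i = c
          · exact ⟨w, hw, hwc, Relation.ReflTransGen.refl⟩
          · have hc1 : c = w i + 1 := zmod2_ne_iff hwc
            have hfS : fl w i ∉ S := by
              intro h
              exact hchalf _ h (by rw [fl_apply_self, hc1])
            obtain ⟨q, hq, hqi, hchain⟩ := escape hcard2 hF hSfin hScard' i hw hfS
            exact ⟨q, hq, by rw [hqi, hc1], hchain⟩
        obtain ⟨p, hp, hpc, hchain1⟩ := hbring u hu
        obtain ⟨r, hr, hrc, hchain2⟩ := hbring v hv
        have mid := halfLift n IH hstep hcard i c hF hSfin hhalf0 p hp hpc r hr hrc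
        exact (hchain1.trans mid).trans (symmQ hchain2)
end MainProof

def Q (n : ℕ) : SimpleGraph (Fin n → ZMod 2) where
  Adj x y := hammingDist x y = 1
  symm := ⟨fun x y h => by rwa [hammingDist_comm]⟩
  loopless := ⟨fun x h => by simp [hammingDist_self] at h⟩

/-- A strongly independent (distant) set: any two distinct members are at graph
distance at least 3. -/
def StronglyIndep {V : Type*} (G : SimpleGraph V) (F : Set V) : Prop :=
  ∀ u ∈ F, ∀ v ∈ F, u ≠ v → 3 ≤ G.dist u v

/-- `G` is `k`-connected: it has more than `k` vertices and stays connected after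
removing any set of fewer than `k` vertices. -/
def KConnected {V : Type*} (G : SimpleGraph V) (k : ℕ) : Prop :=
  k < Nat.card V ∧ ∀ S : Set V, S.Finite → S.ncard < k → (G.induce Sᶜ).Connected

lemma exists_walk (n : ℕ) : ∀ (d : ℕ) (u v : Fin n → ZMod 2), hammingDist u v = d →
    ∃ w : (Q n).Walk u v, w.length = d := by
  intro d
  induction d with
  | zero =>
    intro u v h
    rw [hammingDist_eq_zero] at h
    subst h
    exact ⟨SimpleGraph.Walk.nil, rfl⟩
  | succ d IH =>
    intro u v h
    obtain ⟨j, hj⟩ : ∃ j, u j ≠ v j := by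
      by_contra hcon
      push_neg at hcon
      rw [hammingDist_eq_zero.mpr (funext hcon)] at h
      omega
    have hvj : v j = u j + 1 := zmod2_ne_iff hj
    have hadj : (Q n).Adj u (fl u j) := hamming_fl u j
    have hset : (Finset.univ.filter fun k => fl u j k ≠ v k) =
        (Finset.univ.filter fun k => u k ≠ v k).erase j := by
      ext k
      simp only [Finset.mem_filter, Finset.mem_univ, true_and, Finset.mem_erase]
      constructor
      · intro hk
        have hkj : k ≠ j := by
          rintro rfl
          rw [fl_apply_self, ← hvj] at hk
          exact hk rfl
        rw [fl_apply_ne u hkj] at hk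
        exact ⟨hkj, hk⟩
      · intro hk
        rw [fl_apply_ne u hk.1]
        exact hk.2
    have hd' : hammingDist (fl u j) v = d := by
      have hmem : j ∈ (Finset.univ.filter fun k => u k ≠ v k) := by simp [hj]
      rw [hammingDist, hset, Finset.card_erase_of_mem hmem]
      rw [hammingDist] at h
      omega
    obtain ⟨w, hw⟩ := IH (fl u j) v hd'
    exact ⟨SimpleGraph.Walk.cons hadj w, by simp [hw]⟩

lemma distQ_le (n : ℕ) (u v : Fin n → ZMod 2) : (Q n).dist u v ≤ hammingDist u v := by
  obtain ⟨w, hw⟩ := exists_walk n (hammingDist u v) u v rfl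
  calc (Q n).dist u v ≤ w.length := SimpleGraph.dist_le w
    _ = hammingDist u v := hw

/-- For `n ≥ 3`, if `F` is a strongly independent set of vertices of `Q_n`, then `Q_n - F`
is `(n-1)`-connected. -/
theorem stmt14 (n : ℕ) (hn : 3 ≤ n) (F : Set (Fin n → ZMod 2))
    (hF : StronglyIndep (Q n) F) :
    KConnected ((Q n).induce Fᶜ) (n - 1) := by
  classical
  have hF3 : indep3 F := fun a ha b hb hne =>
    le_trans (hF a ha b hb hne) (distQ_le n a b)
  have h2n := Nat.lt_two_pow_self (n := n)
  have hcardV : Fintype.card (Fin n → ZMod 2) = 2 ^ n := by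
    rw [Fintype.card_fun, ZMod.card, Fintype.card_fin]
  have hflF : ∀ f ∈ F, ∀ j : Fin n, fl f j ∉ F := by
    intro f hf j h
    have h3 := hF3 f hf (fl f j) h (Ne.symm (fl_ne f j))
    rw [hamming_fl f j] at h3
    omega
  constructor
  · -- more than n-1 vertices survive
    rw [Nat.card_coe_set_eq]
    rcases F.eq_empty_or_nonempty with hFe | hFne
    · rw [hFe, Set.compl_empty, Set.ncard_univ, Nat.card_eq_fintype_card, hcardV]
      omega
    · obtain ⟨f, hf⟩ := hFne
      have hg : Function.Injective (fun j : Fin n => (⟨fl f j, hflF f hf j⟩ : ↥(Fᶜ))) := by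
        intro a b hab
        exact fl_inj_index f (congrArg Subtype.val hab)
      have hle : Nat.card (Fin n) ≤ Nat.card ↥(Fᶜ) := Nat.card_le_card_of_injective _ hg
      rw [Nat.card_eq_fintype_card, Fintype.card_fin, Nat.card_coe_set_eq] at hle
      omega
  · intro S hSfin hScard
    have hS'fin : (Subtype.val '' S).Finite := hSfin.image _
    have hS'card : (Subtype.val '' S).ncard ≤ n - 2 := by
      rw [Set.ncard_image_of_injective S Subtype.val_injective]
      omega
    have key := main_lemma n (Fin n) (Fintype.card_fin n) (by omega) F (Subtype.val '' S)
      hF3 hS'fin hS'card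
    have hmemT : ∀ a : ↥(Sᶜ), (a : ↥(Fᶜ)).val ∉ F ∪ (Subtype.val '' S) := by
      rintro a (h | ⟨s, hs, he⟩)
      · exact a.1.2 h
      · exact a.2 (by rwa [Subtype.val_injective he] at hs)
    rw [SimpleGraph.connected_iff]
    constructor
    · intro a b
      have lift : ∀ p q, Relation.ReflTransGen (stepT (F ∪ (Subtype.val '' S))) p q →
          ∀ (hp : p ∉ F ∪ (Subtype.val '' S)) (hq : q ∉ F ∪ (Subtype.val '' S)),
          (((Q n).induce Fᶜ).induce Sᶜ).Reachable
            ⟨⟨p, fun h => hp (Or.inl h)⟩, fun h => hp (Or.inr ⟨_, h, rfl⟩)⟩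
            ⟨⟨q, fun h => hq (Or.inl h)⟩, fun h => hq (Or.inr ⟨_, h, rfl⟩)⟩ := by
        intro p q hc
        induction hc with
        | refl => intro hp hq; rfl
        | @tail b c hab hbc ih =>
          intro hp hq
          have hb := hbc.2.1
          refine (ih hp hb).trans (SimpleGraph.Adj.reachable ?_)
          exact hbc.1
      have := lift a.1.1 b.1.1 (key a.1.1 (hmemT a) b.1.1 (hmemT b)) (hmemT a) (hmemT b)
      exact this
    · -- nonempty
      rcases F.eq_empty_or_nonempty with hFe | hFne
      · obtain ⟨x, hx⟩ : ∃ x, x ∉ Subtype.val '' S := by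
          by_contra hno
          push_neg at hno
          have huniv : (Subtype.val '' S) = Set.univ := Set.eq_univ_of_forall hno
          rw [huniv, Set.ncard_univ, Nat.card_eq_fintype_card, hcardV] at hS'card
          omega
        have hxF : x ∈ Fᶜ := by rw [hFe]; exact Set.notMem_empty x
        exact ⟨⟨⟨x, hxF⟩, fun h => hx ⟨_, h, rfl⟩⟩⟩
      · obtain ⟨f, hf⟩ := hFne
        obtain ⟨j, hj⟩ : ∃ j : Fin n, fl f j ∉ Subtype.val '' S := by
          by_contra hno
          push_neg at hno
          haveI := hS'fin.to_subtype
          have hg : Function.Injective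
              (fun j : Fin n => (⟨fl f j, hno j⟩ : ↥(Subtype.val '' S))) := by
            intro a b hab
            exact fl_inj_index f (congrArg Subtype.val hab)
          have hle := Nat.card_le_card_of_injective _ hg
          rw [Nat.card_eq_fintype_card, Fintype.card_fin, Nat.card_coe_set_eq] at hle
          omega
        exact ⟨⟨⟨fl f j, hflF f hf j⟩, fun h => hj ⟨_, h, rfl⟩⟩⟩
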